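/- arXiv:1511.03132 — 2 statements merged into one kernel-verified Lean document; each statement's English description precedes it below -/
import Mathlib

section
/- Let g' be an (n+1)-dimensional Lie algebra of Vergne type over F with Vergne basis e_1,…,e_{n+1}, and let g = g'/span(e_{n+1}), identified with span(e_1,…,e_n); then g is a Lie algebra of Vergne type and there exists a Chevalley–Eilenberg 2-cocycle ω of g, homogeneous of degree n+1 with nonzero e^1∧e^n component, such that g' is isomorphic to the central extension g(ω). -/
/-!
The top vector `e_{n+1}` of a Vergne basis is central, since `[e_i, e_j]` always lies in
degree `i + j`. Hence brackets of `g'` depend only on the images in `g`: the images of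
`e_1, …, e_n` form a Vergne basis of `g` with the same structure constants, and
`ω(π a, π b) := e^{n+1}[a, b]` is a well-defined bilinear form on `g`. It is alternating
and a cocycle because `g'` is a Lie algebra, homogeneous of degree `n + 1` by the grading,
and `ω(e_1, e_n) = 1` because `[e_1, e_n] = e_{n+1}` in `g'`.
-/

noncomputable section
namespace Char2Filiform

/-- `b` is a Vergne basis of `g` with structure constants `c` (paper-indexed:
`c i j` is `c_{i,j}`):  `[e_1, e_i] = e_{i+1}` for `2 ≤ i ≤ n-1`, `[e_1, e_n] = 0`,
`[e_i, e_j] = c_{i,j} e_{i+j}` for `i, j ≥ 2` with `i + j ≤ n`, and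
`[e_i, e_j] = 0` for `i, j ≥ 2` with `i + j > n`.
(`b ⟨m, _⟩` is the paper's `e_{m+1}`.) -/
def VergneRel (F : Type*) [Field F] (n : ℕ) (g : Type*) [LieRing g] [LieAlgebra F g]
    (b : Module.Basis (Fin n) F g) (c : ℕ → ℕ → F) : Prop :=
  (∀ m : ℕ, (h : m + 3 ≤ n) →
      ⁅b ⟨0, by omega⟩, b ⟨m + 1, by omega⟩⁆ = b ⟨m + 2, by omega⟩) ∧
  (∀ (h : 2 ≤ n), ⁅b ⟨0, by omega⟩, b ⟨n - 1, by omega⟩⁆ = 0) ∧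
  (∀ p q : ℕ, (h : p + q + 4 ≤ n) →
      ⁅b ⟨p + 1, by omega⟩, b ⟨q + 1, by omega⟩⁆ =
        c (p + 2) (q + 2) • b ⟨p + q + 3, by omega⟩) ∧
  (∀ p q : ℕ, (hp : p + 2 ≤ n) → (hq : q + 2 ≤ n) → n < p + q + 4 →
      ⁅b ⟨p + 1, by omega⟩, b ⟨q + 1, by omega⟩⁆ = 0)

open Module

section BasisOfQuotient

variable {R M N : Type*} [Ring R] [AddCommGroup M] [Module R M] [AddCommGroup N] [Module R N]
  {n : ℕ} (b : Basis (Fin (n + 1)) R M) {π : M →ₗ[R] N}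

theorem linearIndependent_map_castSucc_of_ker_le
    (hker : LinearMap.ker π ≤ Submodule.span R {b (Fin.last n)}) :
    LinearIndependent R (π ∘ b ∘ Fin.castSucc) := by
  refine (b.linearIndependent.comp _ (Fin.castSucc_injective n)).map ?_
  have hdisj := b.linearIndependent.disjoint_span_image
    (s := Set.range Fin.castSucc) (t := {Fin.last n}) (by simp [Fin.val_last])
  rw [Set.image_singleton, ← Set.range_comp] at hdisj
  exact hdisj.mono_right hker

theorem top_le_span_map_castSucc (hsurj : Function.Surjective π) (hlast : π (b (Fin.last n)) = 0) :
    ⊤ ≤ Submodule.span R (Set.range (π ∘ b ∘ Fin.castSucc)) := by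
  rw [← LinearMap.range_eq_top.mpr hsurj, LinearMap.range_eq_map, ← b.span_eq,
    Submodule.map_span, Submodule.span_le, ← Set.range_comp]
  rintro _ ⟨j, rfl⟩
  induction j using Fin.lastCases with
  | last => simp [hlast]
  | cast i => exact Submodule.subset_span ⟨i, rfl⟩

end BasisOfQuotient

section CentralKernel

variable {R G g : Type*} [CommRing R] [LieRing G] [LieAlgebra R G] [LieRing g] [LieAlgebra R g]
  {π : G →ₗ⁅R⁆ g}

theorem lie_eq_lie_of_ker_le_center (hπ : π.ker ≤ LieAlgebra.center R G) {a a' b b' : G}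
    (ha : π a = π a') (hb : π b = π b') : ⁅a, b⁆ = ⁅a', b'⁆ := by
  have central : ∀ {k : G}, π k = 0 → ∀ z : G, ⁅z, k⁆ = 0 := fun hk =>
    (LieModule.mem_maxTrivSubmodule R G G _).mp (hπ (LieHom.mem_ker.mpr hk))
  have hleft : ⁅a - a', b⁆ = 0 := by
    rw [← lie_skew, central (by rw [map_sub, ha, sub_self]), neg_zero]
  have hright : ⁅a', b - b'⁆ = 0 := central (by rw [map_sub, hb, sub_self]) a'
  rw [sub_lie, sub_eq_zero] at hleft
  rw [lie_sub, sub_eq_zero] at hright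
  rw [hleft, hright]

variable {M : Type*} [AddCommGroup M] [Module R M] {f : G →ₗ[R] M} {ω : g →ₗ[R] g →ₗ[R] M}

theorem apply_self_eq_zero_of_map_lie (hsurj : Function.Surjective π)
    (hω : ∀ a b : G, ω (π a) (π b) = f ⁅a, b⁆) (x : g) : ω x x = 0 := by
  obtain ⟨a, rfl⟩ := hsurj x
  rw [hω, lie_self, map_zero]

theorem cocycle_of_map_lie (hsurj : Function.Surjective π)
    (hω : ∀ a b : G, ω (π a) (π b) = f ⁅a, b⁆) (x y z : g) :
    ω ⁅x, y⁆ z + ω ⁅y, z⁆ x + ω ⁅z, x⁆ y = 0 := by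
  obtain ⟨a, rfl⟩ := hsurj x
  obtain ⟨b, rfl⟩ := hsurj y
  obtain ⟨c, rfl⟩ := hsurj z
  have jacobi : ⁅⁅a, b⁆, c⁆ + ⁅⁅b, c⁆, a⁆ + ⁅⁅c, a⁆, b⁆ = 0 := by
    rw [← lie_skew ⁅a, b⁆, ← lie_skew ⁅b, c⁆, ← lie_skew ⁅c, a⁆, ← neg_eq_zero]
    simpa only [neg_add, neg_neg, add_comm, add_left_comm] using lie_jacobi a b c
  simp only [← LieHom.map_lie, hω, ← map_add, jacobi, map_zero]

end CentralKernel

theorem exists_bilinear_map_lie {F G g : Type*} [Field F] [LieRing G] [LieAlgebra F G]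
    [LieRing g] [LieAlgebra F g] {π : G →ₗ⁅F⁆ g} (hsurj : Function.Surjective π)
    (hπ : π.ker ≤ LieAlgebra.center F G)
    {M : Type*} [AddCommGroup M] [Module F M] (f : G →ₗ[F] M) :
    ∃ ω : g →ₗ[F] g →ₗ[F] M, ∀ a b : G, ω (π a) (π b) = f ⁅a, b⁆ := by
  obtain ⟨σ, hσ⟩ := (π : G →ₗ[F] g).exists_rightInverse_of_surjective
    (LinearMap.range_eq_top.mpr hsurj)
  have hπσ : ∀ x : g, π (σ x) = x := LinearMap.congr_fun hσ
  refine ⟨((LieAlgebra.ad F G : G →ₗ[F] Module.End F G).compr₂ f).compl₁₂ σ σ, fun a b => ?_⟩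
  simp only [LinearMap.compl₁₂_apply, LinearMap.compr₂_apply, LieHom.coe_toLinearMap,
    LieAlgebra.ad_apply]
  exact congrArg f (lie_eq_lie_of_ker_le_center hπ (hπσ _) (hπσ _))

namespace VergneRel

variable {F : Type*} [Field F] {n : ℕ} {g : Type*} [LieRing g] [LieAlgebra F g]
  {b : Basis (Fin n) F g} {c : ℕ → ℕ → F}

theorem repr_lie_first_eq_zero (hb : VergneRel F n g b c) (h0 : 0 < n) {j k : Fin n}
    (hk : (k : ℕ) ≠ j + 1) : b.repr ⁅b ⟨0, h0⟩, b j⁆ k = 0 := by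
  obtain ⟨_ | q, hj⟩ := j
  · simp
  dsimp only at hk
  rcases Nat.lt_or_ge (q + 2) n with hq | hq
  · rw [hb.1 q hq]
    simp only [Basis.repr_self, Finsupp.single_apply, Fin.ext_iff]
    exact if_neg (by omega)
  · obtain rfl : n = q + 2 := by omega
    have hlast : ⁅b ⟨0, h0⟩, b ⟨q + 1, hj⟩⁆ = 0 := hb.2.1 (by omega)
    rw [hlast, map_zero, Finsupp.zero_apply]

theorem repr_lie_eq_zero (hb : VergneRel F n g b c) {i j k : Fin n}
    (hk : (k : ℕ) ≠ i + j + 1) : b.repr ⁅b i, b j⁆ k = 0 := by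
  obtain ⟨_ | p, hi⟩ := i
  · exact hb.repr_lie_first_eq_zero hi (by simpa using hk)
  obtain ⟨_ | q, hj⟩ := j
  · rw [← lie_skew, map_neg, Finsupp.neg_apply, hb.repr_lie_first_eq_zero hj (by simpa using hk),
      neg_zero]
  dsimp only at hk
  rcases Nat.lt_or_ge (p + q + 3) n with hpq | hpq
  · rw [hb.2.2.1 p q hpq, map_smul, Basis.repr_self, Finsupp.smul_apply, Finsupp.single_apply,
      if_neg (by simp only [Fin.ext_iff]; omega), smul_zero]
  · rw [hb.2.2.2 p q hi hj (by omega), map_zero, Finsupp.zero_apply]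

theorem last_mem_center {b : Basis (Fin (n + 1)) F g} (hb : VergneRel F (n + 1) g b c) :
    b (Fin.last n) ∈ LieAlgebra.center F g := by
  have had : LieAlgebra.ad F g (b (Fin.last n)) = 0 := b.ext fun j => b.ext_elem fun k => by
    rw [LieAlgebra.ad_apply, hb.repr_lie_eq_zero (by simp only [Fin.val_last]; omega)]
    simp
  refine (LieModule.mem_maxTrivSubmodule F g g _).mpr fun z => ?_
  rw [← lie_skew, ← LieAlgebra.ad_apply F, had, LinearMap.zero_apply, neg_zero]

theorem lie_first_penultimate {b : Basis (Fin (n + 1)) F g} (hb : VergneRel F (n + 1) g b c)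
    (hn : 2 ≤ n) : ⁅b ⟨0, by omega⟩, b ⟨n - 1, by omega⟩⁆ = b (Fin.last n) := by
  obtain ⟨m, rfl⟩ : ∃ m, n = m + 2 := ⟨n - 2, by omega⟩
  exact hb.1 m (by omega)

theorem of_map_castSucc {G : Type*} [LieRing G] [LieAlgebra F G] {bG : Basis (Fin (n + 1)) F G}
    (hbG : VergneRel F (n + 1) G bG c) (π : G →ₗ⁅F⁆ g) (hlast : π (bG (Fin.last n)) = 0)
    (hb : ∀ i, b i = π (bG i.castSucc)) : VergneRel F n g b c := by
  refine ⟨fun m h => ?_, fun h => ?_, fun p q h => ?_, fun p q hp hq h => ?_⟩ <;>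
    simp only [hb, Fin.castSucc_mk, ← LieHom.map_lie]
  · rw [hbG.1 m (by omega)]
  · rw [hbG.lie_first_penultimate h, hlast]
  · rw [hbG.2.2.1 p q (by omega), map_smul]
  · obtain hlt | rfl := (Nat.le_of_lt_succ h).lt_or_eq
    · rw [hbG.2.2.2 p q (by omega) (by omega) (by omega), map_zero]
    rw [hbG.2.2.1 p q (by omega), map_smul]
    exact (congrArg (c (p + 2) (q + 2) • ·) hlast).trans (smul_zero _)

end VergneRel

theorem quotient_is_vergne_and_extension (F : Type*) [Field F]
    (n : ℕ) (hn : 2 ≤ n)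
    (G : Type*) [LieRing G] [LieAlgebra F G]
    (bG : Module.Basis (Fin (n + 1)) F G) (c : ℕ → ℕ → F)
    (hbG : VergneRel F (n + 1) G bG c)
    -- g, with the projection π, realizes the quotient G / span(e_{n+1}):
    (g : Type*) [LieRing g] [LieAlgebra F g]
    (π : G →ₗ⁅F⁆ g) (hsurj : Function.Surjective π)
    (hker : ∀ x : G, π x = 0 ↔ x ∈ Submodule.span F {bG (Fin.last n)}) :
    ∃ B : Module.Basis (Fin n) F g,
      (∀ i : Fin n, B i = π (bG i.castSucc)) ∧
      (∃ c' : ℕ → ℕ → F, VergneRel F n g B c') ∧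
      ∃ ω : g →ₗ[F] g →ₗ[F] F,
        (∀ x : g, ω x x = 0) ∧
        (∀ x y z : g, ω ⁅x, y⁆ z + ω ⁅y, z⁆ x + ω ⁅z, x⁆ y = 0) ∧
        (∀ i j : Fin n, (i : ℕ) + (j : ℕ) + 2 ≠ n + 1 → ω (B i) (B j) = 0) ∧
        ω (B ⟨0, by omega⟩) (B ⟨n - 1, by omega⟩) ≠ 0 ∧
        (∀ i j : Fin n,
          (bG.repr ⁅bG i.castSucc, bG j.castSucc⁆) (Fin.last n) = ω (B i) (B j)) := by
  have hlast : π (bG (Fin.last n)) = 0 := (hker _).mpr (Submodule.mem_span_singleton_self _)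
  let B : Basis (Fin n) F g := Basis.mk
    (linearIndependent_map_castSucc_of_ker_le bG (π := π) fun x hx =>
      (hker x).mp (LinearMap.mem_ker.mp hx))
    (top_le_span_map_castSucc bG hsurj hlast)
  have hB : ∀ i, B i = π (bG i.castSucc) := Basis.mk_apply _ _
  have hcenter : π.ker ≤ LieAlgebra.center F G := fun x hx => by
    obtain ⟨t, rfl⟩ := Submodule.mem_span_singleton.mp ((hker x).mp (LieHom.mem_ker.mp hx))
    exact Submodule.smul_mem _ t hbG.last_mem_center
  obtain ⟨ω, hω⟩ := exists_bilinear_map_lie hsurj hcenter (bG.coord (Fin.last n))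
  have hωB : ∀ i j, ω (B i) (B j) = bG.repr ⁅bG i.castSucc, bG j.castSucc⁆ (Fin.last n) := by
    simp only [hB, hω, Basis.coord_apply, implies_true]
  refine ⟨B, hB, ⟨c, hbG.of_map_castSucc π hlast hB⟩, ω, apply_self_eq_zero_of_map_lie hsurj hω,
    cocycle_of_map_lie hsurj hω, fun i j hij => ?_, ?_, fun i j => (hωB i j).symm⟩
  · rw [hωB, hbG.repr_lie_eq_zero]
    simp only [Fin.val_last, Fin.val_castSucc]
    omega
  · rw [hωB, Fin.castSucc_mk, Fin.castSucc_mk, hbG.lie_first_penultimate hn]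
    simp

end Char2Filiform
end
end

section
/- The Lie algebras m0(5) and m2(5) over F are not isomorphic: m0(5) has an abelian ideal of codimension 1, while m2(5) has no abelian ideal of codimension 1. -/
/-!
In `m0(5)` the span of `e₂, …, e₅` is an abelian ideal of codimension one, and having such an
ideal is invariant under isomorphism. In `m2(5)`, a codimension-one ideal contains the derived
algebra, hence `e₃ = ⁅e₁, e₂⁆`; being abelian, it then lies in the centralizer of `e₃`. But
`⁅x, e₃⁆ = x₁ e₄ + x₂ e₅` for `x = ∑ xᵢ eᵢ`, so this centralizer is `span {e₃, e₄, e₅}`, too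
small to contain a 4-dimensional ideal.
-/

open Module Submodule

section CommRing

variable {R L : Type*} [CommRing R] [LieRing L] [LieAlgebra R L]

theorem Submodule.lie_mem_of_mem_span {s t : Set L} {p : Submodule R L}
    (h : ∀ x ∈ s, ∀ y ∈ t, ⁅x, y⁆ ∈ p) {x y : L} (hx : x ∈ span R s) (hy : y ∈ span R t) :
    ⁅x, y⁆ ∈ p := by
  have hxy := apply_mem_map₂ (LieAlgebra.ad R L : L →ₗ[R] Module.End R L) hx hy
  rw [map₂_span_span] at hxy
  refine span_le.2 ?_ hxy
  rintro _ ⟨x, hx, y, hy, rfl⟩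
  simpa using h x hx y hy

theorem Module.Basis.lie_eq_sum {ι : Type*} [Fintype ι] (b : Basis ι R L) (x y : L) :
    ⁅x, y⁆ = ∑ i, b.repr x i • ⁅b i, y⁆ := by
  conv_lhs => rw [← b.sum_repr x]
  simp only [sum_lie, smul_lie]

variable (R L) in
def LieAlgebra.HasAbelianIdealOfCodimOne : Prop :=
  ∃ I : LieIdeal R L, (∀ x y : L, x ∈ I → y ∈ I → ⁅x, y⁆ = 0) ∧
    finrank R (L ⧸ (I : LieSubmodule R L L).toSubmodule) = 1

theorem LieAlgebra.HasAbelianIdealOfCodimOne.of_lieEquiv {L' : Type*} [LieRing L']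
    [LieAlgebra R L'] (hL : HasAbelianIdealOfCodimOne R L) (e : L ≃ₗ⁅R⁆ L') :
    HasAbelianIdealOfCodimOne R L' := by
  obtain ⟨I, hab, hcodim⟩ := hL
  refine ⟨I.comap e.symm.toLieHom, fun x y hx hy => e.symm.injective ?_, ?_⟩
  · simpa using hab _ _ hx hy
  · rw [← hcodim]
    exact (Quotient.equiv _ _ e.toLinearEquiv (map_equiv_eq_comap_symm _ _)).finrank_eq.symm

end CommRing

section Field

variable {K L : Type*} [Field K] [LieRing L] [LieAlgebra K L]

theorem Module.Basis.finrank_quotient_span_succ {V : Type*} [AddCommGroup V] [Module K V]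
    {n : ℕ} (b : Basis (Fin (n + 1)) K V) :
    finrank K (V ⧸ span K (Set.range (b ∘ Fin.succ))) = 1 := by
  have := Module.Finite.of_basis b
  have := finrank_quotient_add_finrank (span K (Set.range (b ∘ Fin.succ)))
  rw [finrank_span_eq_card (b.linearIndependent.comp _ (Fin.succ_injective n)),
    finrank_eq_card_basis b, Fintype.card_fin, Fintype.card_fin] at this
  omega

/-- A one-dimensional Lie algebra, here `L ⧸ I`, is abelian. -/
theorem LieIdeal.lie_mem_of_finrank_quotient_eq_one {I : LieIdeal K L}
    (hI : finrank K (L ⧸ (I : LieSubmodule K L L).toSubmodule) = 1) (x y : L) : ⁅x, y⁆ ∈ I := by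
  obtain ⟨v, -, hv⟩ := finrank_eq_one_iff'.1 hI
  obtain ⟨c, hc⟩ := hv (LieSubmodule.Quotient.mk x)
  obtain ⟨d, hd⟩ := hv (LieSubmodule.Quotient.mk y)
  rw [← LieSubmodule.Quotient.mk_eq_zero', LieSubmodule.Quotient.mk_bracket, ← hc, ← hd]
  simp

theorem LieAlgebra.HasAbelianIdealOfCodimOne.finrank_le_finrank_ker_ad_add_one
    [FiniteDimensional K L] (hL : HasAbelianIdealOfCodimOne K L) (y z : L) :
    finrank K L ≤ finrank K (LinearMap.ker (ad K L ⁅y, z⁆)) + 1 := by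
  obtain ⟨I, hab, hcodim⟩ := hL
  have hI : (I : LieSubmodule K L L).toSubmodule ≤ LinearMap.ker (ad K L ⁅y, z⁆) :=
    fun v hv => hab _ _ (I.lie_mem_of_finrank_quotient_eq_one hcodim y z) hv
  have := finrank_quotient_add_finrank (I : LieSubmodule K L L).toSubmodule
  have := finrank_mono hI
  omega

theorem Module.Basis.hasAbelianIdealOfCodimOne {n : ℕ} (b : Basis (Fin (n + 1)) K L)
    (hcomm : ∀ i j : Fin n, ⁅b i.succ, b j.succ⁆ = 0)
    (hmem : ∀ j : Fin n, ⁅b 0, b j.succ⁆ ∈ span K (Set.range (b ∘ Fin.succ))) :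
    LieAlgebra.HasAbelianIdealOfCodimOne K L := by
  set S := span K (Set.range (b ∘ Fin.succ))
  have hbasis : ∀ i j, ⁅b i, b j⁆ ∈ S := by
    intro i j
    induction i using Fin.cases <;> induction j using Fin.cases
    · simp
    · exact hmem _
    · rw [← lie_skew]
      exact S.neg_mem (hmem _)
    · simp [hcomm]
  have hder : ∀ x y : L, ⁅x, y⁆ ∈ S := fun x y =>
    lie_mem_of_mem_span (by rintro _ ⟨i, rfl⟩ _ ⟨j, rfl⟩; exact hbasis i j)
      (b.mem_span x) (b.mem_span y)
  refine ⟨{ toSubmodule := S, lie_mem := fun _ => hder _ _ }, fun x y hx hy => ?_,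
    b.finrank_quotient_span_succ⟩
  simpa using lie_mem_of_mem_span (p := ⊥)
    (by rintro _ ⟨i, rfl⟩ _ ⟨j, rfl⟩; simpa using hcomm i j) hx hy

end Field

namespace Char2Filiform

open LieAlgebra

theorem m0_hasAbelianIdealOfCodimOne {F g : Type*} [Field F] [LieRing g] [LieAlgebra F g]
    (b : Module.Basis (Fin 5) F g) (h01 : ⁅b 0, b 1⁆ = b 2) (h02 : ⁅b 0, b 2⁆ = b 3)
    (h03 : ⁅b 0, b 3⁆ = b 4) (h04 : ⁅b 0, b 4⁆ = 0)
    (hcomm : ∀ i j : Fin 5, 1 ≤ (i : ℕ) → 1 ≤ (j : ℕ) → ⁅b i, b j⁆ = 0) :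
    HasAbelianIdealOfCodimOne F g := by
  refine b.hasAbelianIdealOfCodimOne
    (fun i j => hcomm _ _ (Nat.succ_pos i) (Nat.succ_pos j)) fun j => ?_
  have hmem : ∀ k : Fin 4, b k.succ ∈ span F (Set.range (b ∘ Fin.succ)) :=
    fun k => subset_span ⟨k, rfl⟩
  fin_cases j
  · simpa [h01] using hmem 1
  · simpa [h02] using hmem 2
  · simpa [h03] using hmem 3
  · simp [h04]

theorem m2_not_hasAbelianIdealOfCodimOne {F h : Type*} [Field F] [LieRing h] [LieAlgebra F h]
    (b : Module.Basis (Fin 5) F h) (h01 : ⁅b 0, b 1⁆ = b 2) (h02 : ⁅b 0, b 2⁆ = b 3)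
    (h12 : ⁅b 1, b 2⁆ = b 4) (h32 : ⁅b 3, b 2⁆ = 0) (h42 : ⁅b 4, b 2⁆ = 0) :
    ¬ HasAbelianIdealOfCodimOne F h := by
  classical
  intro hL
  have := Module.Finite.of_basis b
  have hker : LinearMap.ker (ad F h (b 2)) ≤
      span F ((({2, 3, 4} : Finset (Fin 5)).image b : Finset h) : Set h) := by
    intro v hv
    have hv2 : b.repr v 0 • b 3 + b.repr v 1 • b 4 = 0 := by
      rw [LinearMap.mem_ker, ad_apply, ← lie_skew, neg_eq_zero, b.lie_eq_sum,
        Fin.sum_univ_five, h02, h12, lie_self, h32, h42] at hv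
      simpa using hv
    have hv0 : b.repr v 0 = 0 := by simpa using congrArg (b.repr · 3) hv2
    have hv1 : b.repr v 1 = 0 := by simpa using congrArg (b.repr · 4) hv2
    rw [Finset.coe_image, b.mem_span_image]
    intro i hi
    fin_cases i
    · exact absurd hv0 (Finsupp.mem_support_iff.1 hi)
    · exact absurd hv1 (Finsupp.mem_support_iff.1 hi)
    all_goals simp
  have hdim := hL.finrank_le_finrank_ker_ad_add_one (b 0) (b 1)
  rw [h01, finrank_eq_card_basis b, Fintype.card_fin] at hdim
  have := (finrank_mono hker).trans ((finrank_span_finset_le_card _).trans Finset.card_image_le)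
  have : ({2, 3, 4} : Finset (Fin 5)).card = 3 := rfl
  omega

theorem m0_5_not_iso_m2_5 (F : Type*) [Field F]
    (g h : Type*) [LieRing g] [LieAlgebra F g] [LieRing h] [LieAlgebra F h]
    (bg : Module.Basis (Fin 5) F g) (bh : Module.Basis (Fin 5) F h)
    -- g is m0(5):
    (hg1 : ∀ m : ℕ, (hm : m + 3 ≤ 5) →
      ⁅bg ⟨0, by omega⟩, bg ⟨m + 1, by omega⟩⁆ = bg ⟨m + 2, by omega⟩)
    (hg2 : ⁅bg 0, bg 4⁆ = 0)
    (hg3 : ∀ i j : Fin 5, 1 ≤ (i : ℕ) → 1 ≤ (j : ℕ) → ⁅bg i, bg j⁆ = 0)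
    -- h is m2(5):
    (hh1 : ∀ m : ℕ, (hm : m + 3 ≤ 5) →
      ⁅bh ⟨0, by omega⟩, bh ⟨m + 1, by omega⟩⁆ = bh ⟨m + 2, by omega⟩)
    (hh3 : ⁅bh 1, bh 2⁆ = bh 4)
    (hh4 : ∀ i j : Fin 5, 1 ≤ (i : ℕ) → 1 ≤ (j : ℕ) →
      ¬((i = 1 ∧ j = 2) ∨ (i = 2 ∧ j = 1)) → ⁅bh i, bh j⁆ = 0) :
    (¬ Nonempty (g ≃ₗ⁅F⁆ h)) ∧
    (∃ I : LieIdeal F g,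
      (∀ x y : g, x ∈ I → y ∈ I → ⁅x, y⁆ = 0) ∧
      Module.finrank F (g ⧸ (I : LieSubmodule F g g).toSubmodule) = 1) ∧
    (¬ ∃ I : LieIdeal F h,
      (∀ x y : h, x ∈ I → y ∈ I → ⁅x, y⁆ = 0) ∧
      Module.finrank F (h ⧸ (I : LieSubmodule F h h).toSubmodule) = 1) := by
  have hg := m0_hasAbelianIdealOfCodimOne bg (by simpa using hg1 0 (by omega))
    (by simpa using hg1 1 (by omega)) (by simpa using hg1 2 (by omega)) hg2 hg3
  have hh := m2_not_hasAbelianIdealOfCodimOne bh (by simpa using hh1 0 (by omega))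
    (by simpa using hh1 1 (by omega)) hh3 (hh4 3 2 (by decide) (by decide) (by decide))
    (hh4 4 2 (by decide) (by decide) (by decide))
  exact ⟨fun ⟨e⟩ => hh (hg.of_lieEquiv e), hg, hh⟩

end Char2Filiform
end
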